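/- arXiv:2403.17990 — 2 statements merged into one kernel-verified Lean document; each statement's English description precedes it below -/
import Mathlib

section
/- Let μ_T, μ_S, μ_{TS} : [0,∞) → [0,∞) be non-increasing functions satisfying the submultiplicativity property μ_{TS}(t₁ + t₂) ≤ μ_T(t₁) · μ_S(t₂) for all t₁, t₂ ≥ 0. Let p, q, r > 0 with 1/r = 1/p + 1/q. Define ‖f‖'_{s,∞} = sup_{t>0} (s·t)^(1/s) f(t). Then ‖μ_{TS}‖'_{r,∞} ≤ ‖μ_T‖'_{p,∞} · ‖μ_S‖'_{q,∞}. -/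
open Set ENNReal

theorem stmt1 (μT μS μTS : ℝ → ℝ≥0∞)
    (hT : AntitoneOn μT (Ici 0)) (hS : AntitoneOn μS (Ici 0))
    (hTS : AntitoneOn μTS (Ici 0))
    (hsub : ∀ t₁ t₂ : ℝ, 0 ≤ t₁ → 0 ≤ t₂ → μTS (t₁ + t₂) ≤ μT t₁ * μS t₂)
    (p q r : ℝ) (hp : 0 < p) (hq : 0 < q) (hr : 0 < r)
    (h : 1/r = 1/p + 1/q) :
    (⨆ t ∈ Ioi (0:ℝ), ENNReal.ofReal ((r * t) ^ (1/r)) * μTS t)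
      ≤ (⨆ t ∈ Ioi (0:ℝ), ENNReal.ofReal ((p * t) ^ (1/p)) * μT t)
        * (⨆ t ∈ Ioi (0:ℝ), ENNReal.ofReal ((q * t) ^ (1/q)) * μS t) := by
  refine iSup₂_le fun t ht => ?_
  have ht' : (0:ℝ) < t := ht
  set t₁ := (r/p) * t with ht₁def
  set t₂ := (r/q) * t with ht₂def
  have ht₁ : 0 < t₁ := by positivity
  have ht₂ : 0 < t₂ := by positivity
  have hsum : t₁ + t₂ = t := by
    have hrr : r / p + r / q = 1 := by
      have := congrArg (r * ·) h
      field_simp at this ⊢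
      linarith
    rw [ht₁def, ht₂def, ← add_mul, hrr, one_mul]
  have hpt : p * t₁ = r * t := by
    rw [ht₁def]; field_simp
  have hqt : q * t₂ = r * t := by
    rw [ht₂def]; field_simp
  have hrt : 0 < r * t := by positivity
  have key : (r*t)^(1/r) = (p*t₁)^(1/p) * (q*t₂)^(1/q) := by
    rw [hpt, hqt, ← Real.rpow_add hrt, ← h]
  have hμ : μTS t ≤ μT t₁ * μS t₂ := by
    rw [← hsum]; exact hsub t₁ t₂ ht₁.le ht₂.le
  calc ENNReal.ofReal ((r*t)^(1/r)) * μTS t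
      ≤ ENNReal.ofReal ((p*t₁)^(1/p)) * ENNReal.ofReal ((q*t₂)^(1/q)) * (μT t₁ * μS t₂) := by
        rw [key, ENNReal.ofReal_mul (by positivity)]
        exact mul_le_mul_right hμ _
    _ = (ENNReal.ofReal ((p*t₁)^(1/p)) * μT t₁) * (ENNReal.ofReal ((q*t₂)^(1/q)) * μS t₂) := by
        ring
    _ ≤ _ := mul_le_mul'
        (le_iSup₂ (f := fun t (_ : t ∈ Ioi (0:ℝ)) => ENNReal.ofReal ((p * t) ^ (1/p)) * μT t) t₁ (mem_Ioi.mpr ht₁))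
        (le_iSup₂ (f := fun t (_ : t ∈ Ioi (0:ℝ)) => ENNReal.ofReal ((q * t) ^ (1/q)) * μS t) t₂ (mem_Ioi.mpr ht₂))
end

section
/- Let p, q, r > 0 with 1/r = 1/p + 1/q. Suppose f, g, h : [0,∞) → [0,∞) satisfy h(t₁+t₂) ≤ f(t₁)g(t₂) for all t₁, t₂ ≥ 0, and suppose sup_{t>0} t^(1/p) f(t) ≤ 1 and sup_{t>0} t^(1/q) g(t) ≤ 1. Then for all t > 0, h(t) ≤ ((p+q)^(1/p+1/q)/(q^(1/p) p^(1/q))) · t^(-1/r). -/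
open Real

lemma le_rpow_neg_of_rpow_mul_le_one {t a x : ℝ} (ht : 0 < t) (h : t ^ a * x ≤ 1) :
    x ≤ t ^ (-a) := by
  rwa [rpow_neg ht.le, ← one_div, le_div_iff₀' (rpow_pos_of_pos ht a)]

lemma mul_rpow_neg_mul_mul_rpow_neg {x y t : ℝ} (hx : 0 < x) (hy : 0 < y) (ht : 0 < t)
    (a b : ℝ) : (x * t) ^ (-a) * (y * t) ^ (-b) = t ^ (-(a + b)) / (x ^ a * y ^ b) := by
  rw [mul_rpow hx.le ht.le, mul_rpow hy.le ht.le, rpow_neg hx.le, rpow_neg hy.le, neg_add,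
    rpow_add ht]
  field_simp

lemma rpow_neg_mul_rpow_neg_of_optimal_split {p q t : ℝ} (hp : 0 < p) (hq : 0 < q)
    (ht : 0 < t) (a b : ℝ) :
    (q / (p + q) * t) ^ (-a) * (p / (p + q) * t) ^ (-b)
      = (p + q) ^ (a + b) / (q ^ a * p ^ b) * t ^ (-(a + b)) := by
  have hpq : 0 < p + q := by linarith
  rw [mul_rpow_neg_mul_mul_rpow_neg (by positivity) (by positivity) ht,
    div_rpow hq.le hpq.le, div_rpow hp.le hpq.le, rpow_add hpq]
  have := rpow_pos_of_pos hp b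
  have := rpow_pos_of_pos hq a
  have := rpow_pos_of_pos hpq a
  have := rpow_pos_of_pos hpq b
  field_simp

theorem stmt9_general (p q r : ℝ) (hp : 0 < p) (hq : 0 < q)
    (h : 1/r = 1/p + 1/q)
    (f g h' : ℝ → ℝ)
    (hg0 : ∀ t, 0 ≤ t → 0 ≤ g t)
    (hsub : ∀ t₁ t₂ : ℝ, 0 ≤ t₁ → 0 ≤ t₂ → h' (t₁ + t₂) ≤ f t₁ * g t₂)
    (hfA : ∀ t : ℝ, 0 < t → t ^ (1/p) * f t ≤ 1)
    (hgB : ∀ t : ℝ, 0 < t → t ^ (1/q) * g t ≤ 1) :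
    ∀ t : ℝ, 0 < t →
      h' t ≤ ((p + q) ^ (1/p + 1/q) / (q ^ (1/p) * p ^ (1/q))) * t ^ (-(1/r)) := by
  intro t ht
  have hpq : 0 < p + q := by linarith
  have ht₁ : 0 < q / (p + q) * t := by positivity
  have ht₂ : 0 < p / (p + q) * t := by positivity
  -- This split minimises `t₁ ^ (-(1/p)) * t₂ ^ (-(1/q))` subject to `t₁ + t₂ = t`.
  have hsplit : q / (p + q) * t + p / (p + q) * t = t := by
    field_simp
    ring
  calc h' t = h' (q / (p + q) * t + p / (p + q) * t) := by rw [hsplit]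
    _ ≤ f (q / (p + q) * t) * g (p / (p + q) * t) := hsub _ _ ht₁.le ht₂.le
    _ ≤ (q / (p + q) * t) ^ (-(1/p)) * (p / (p + q) * t) ^ (-(1/q)) :=
        mul_le_mul (le_rpow_neg_of_rpow_mul_le_one ht₁ (hfA _ ht₁))
          (le_rpow_neg_of_rpow_mul_le_one ht₂ (hgB _ ht₂)) (hg0 _ ht₂.le)
          (rpow_nonneg ht₁.le _)
    _ = _ := by rw [h, rpow_neg_mul_rpow_neg_of_optimal_split hp hq ht]

theorem stmt9 (p q r : ℝ) (hp : 0 < p) (hq : 0 < q) (hr : 0 < r)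
    (h : 1/r = 1/p + 1/q)
    (f g h' : ℝ → ℝ)
    (hf0 : ∀ t, 0 ≤ t → 0 ≤ f t) (hg0 : ∀ t, 0 ≤ t → 0 ≤ g t)
    (hh0 : ∀ t, 0 ≤ t → 0 ≤ h' t)
    (hsub : ∀ t₁ t₂ : ℝ, 0 ≤ t₁ → 0 ≤ t₂ → h' (t₁ + t₂) ≤ f t₁ * g t₂)
    (hfA : ∀ t : ℝ, 0 < t → t ^ (1/p) * f t ≤ 1)
    (hgB : ∀ t : ℝ, 0 < t → t ^ (1/q) * g t ≤ 1) :
    ∀ t : ℝ, 0 < t →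
      h' t ≤ ((p + q) ^ (1/p + 1/q) / (q ^ (1/p) * p ^ (1/q))) * t ^ (-(1/r)) :=
  stmt9_general p q r hp hq h f g h' hg0 hsub hfA hgB
end
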